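/- arXiv:2203.11062 — 3 statements merged into one kernel-verified Lean document; each statement's English description precedes it below -/
import Mathlib

section
/- Let a_1, ..., a_d be linearly independent vectors in R^d with <a_i, a_j> ≤ 0 for all i < j. Let b_1, ..., b_d be vectors such that cone(b_1,...,b_d) = {x ∈ R^d : <a_i, x> ≤ 0 for all i}. Then <b_i, b_j> ≥ 0 for all 1 ≤ i < j ≤ d. -/
/-!
Write `-x = ∑ sᵢ aᵢ` in the basis `a`. For `x` in the polar cone, `⟪aᵢ, -x⟫ ≥ 0` for every `i`,
and for an obtuse independent family this forces `sᵢ ≥ 0`: splitting `s = s⁺ - s⁻` and setting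
`n = ∑ sᵢ⁻ aᵢ`, `p = ∑ sᵢ⁺ aᵢ`, one gets `‖n‖² = ⟪n, p⟫ - ⟪n, -x⟫ ≤ 0`, since `s⁺` and `s⁻` have
disjoint supports. Then `⟪x, y⟫ = ∑ sᵢ ⟪aᵢ, -y⟫ ≥ 0` for `y` in the polar cone as well; the `bᵢ`
lie in it by the cone hypothesis.
-/

open scoped RealInnerProductSpace

variable {ι E : Type*} [Fintype ι] [NormedAddCommGroup E] [InnerProductSpace ℝ E]

lemma inner_sum_smul_sum_smul_nonpos_of_pairwise {a : ι → E}
    (hobtuse : Pairwise fun i j ↦ ⟪a i, a j⟫ ≤ 0) {s t : ι → ℝ} (hs : 0 ≤ s) (ht : 0 ≤ t)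
    (hdisj : ∀ i, s i * t i = 0) :
    ⟪∑ i, s i • a i, ∑ j, t j • a j⟫ ≤ 0 := by
  rw [sum_inner]
  refine Finset.sum_nonpos fun i _ ↦ ?_
  rw [inner_sum]
  refine Finset.sum_nonpos fun j _ ↦ ?_
  rw [real_inner_smul_left, real_inner_smul_right]
  obtain rfl | hij := eq_or_ne i j
  · rw [← mul_assoc, hdisj, zero_mul]
  · exact mul_nonpos_of_nonneg_of_nonpos (hs i)
      (mul_nonpos_of_nonneg_of_nonpos (ht j) (hobtuse hij))

lemma LinearIndependent.nonneg_of_inner_sum_smul_nonneg {a : ι → E} (ha : LinearIndependent ℝ a)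
    (hobtuse : Pairwise fun i j ↦ ⟪a i, a j⟫ ≤ 0) {t : ι → ℝ}
    (ht : ∀ i, 0 ≤ ⟪a i, ∑ j, t j • a j⟫) : 0 ≤ t := by
  set n := ∑ i, (t i)⁻ • a i
  set p := ∑ i, (t i)⁺ • a i
  have hsplit : ∑ j, t j • a j = p - n := by
    simp only [p, n, ← Finset.sum_sub_distrib, ← sub_smul, posPart_sub_negPart]
  have hnp : ⟪n, p⟫ ≤ 0 := by
    refine inner_sum_smul_sum_smul_nonpos_of_pairwise hobtuse (fun i ↦ negPart_nonneg _)
      (fun i ↦ posPart_nonneg _) fun i ↦ ?_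
    rcases le_total 0 (t i) with h | h <;> simp [h]
  have hnv : 0 ≤ ⟪n, ∑ j, t j • a j⟫ := by
    simp only [n, sum_inner, real_inner_smul_left]
    exact Finset.sum_nonneg fun i _ ↦ mul_nonneg (negPart_nonneg _) (ht i)
  have hn : n = 0 := by
    rw [← real_inner_self_nonpos]
    have : ⟪n, n⟫ = ⟪n, p⟫ - ⟪n, ∑ j, t j • a j⟫ := by rw [hsplit, inner_sub_right]; ring
    linarith
  intro i
  exact negPart_eq_zero.mp (Fintype.linearIndependent_iff.mp ha _ hn i)

lemma LinearIndependent.inner_nonneg_of_forall_inner_nonpos {a : ι → E}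
    (ha : LinearIndependent ℝ a) (hobtuse : Pairwise fun i j ↦ ⟪a i, a j⟫ ≤ 0) {x y : E}
    (hspan : x ∈ Submodule.span ℝ (Set.range a))
    (hx : ∀ i, ⟪a i, x⟫ ≤ 0) (hy : ∀ i, ⟪a i, y⟫ ≤ 0) : 0 ≤ ⟪x, y⟫ := by
  obtain ⟨s, hs⟩ := (Submodule.mem_span_range_iff_exists_fun ℝ).mp (Submodule.neg_mem _ hspan)
  have hs_nonneg : 0 ≤ s :=
    ha.nonneg_of_inner_sum_smul_nonneg hobtuse fun i ↦ by
      rw [hs, inner_neg_right]; linarith [hx i]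
  rw [← inner_neg_neg, ← hs, sum_inner]
  refine Finset.sum_nonneg fun i _ ↦ ?_
  rw [real_inner_smul_left, inner_neg_right]
  exact mul_nonneg (hs_nonneg i) (by linarith [hy i])

theorem stmt_0 (d : ℕ) (a b : Fin d → EuclideanSpace ℝ (Fin d))
    (ha : LinearIndependent ℝ a)
    (hneg : ∀ i j : Fin d, i < j → ⟪a i, a j⟫ ≤ 0)
    (hcone : {x : EuclideanSpace ℝ (Fin d) |
        ∃ c : Fin d → ℝ, (∀ i, 0 ≤ c i) ∧ x = ∑ i, c i • b i} =
      {x : EuclideanSpace ℝ (Fin d) | ∀ i, ⟪a i, x⟫ ≤ 0}) :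
    ∀ i j : Fin d, i < j → 0 ≤ ⟪b i, b j⟫ := by
  have hobtuse : Pairwise fun i j ↦ ⟪a i, a j⟫ ≤ 0 := fun i j hij ↦ by
    rcases hij.lt_or_gt with h | h
    · exact hneg i j h
    · rw [real_inner_comm]; exact hneg j i h
  have hspan : Submodule.span ℝ (Set.range a) = ⊤ :=
    ha.span_eq_top_of_card_eq_finrank' (by simp)
  have hpolar : ∀ m k, ⟪a k, b m⟫ ≤ 0 := by
    intro m
    have hmem : b m ∈ {x | ∃ c : Fin d → ℝ, (∀ i, 0 ≤ c i) ∧ x = ∑ i, c i • b i} :=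
      ⟨Pi.single m (1 : ℝ), fun i ↦ by rw [Pi.single_apply]; positivity, by simp [Pi.single_apply]⟩
    rwa [hcone] at hmem
  intro i j _
  exact ha.inner_nonneg_of_forall_inner_nonpos hobtuse (hspan ▸ Submodule.mem_top)
    (hpolar i) (hpolar j)
end

section
/- Let P ⊆ R^2 be a convex polygon whose vertices all lie on a circle centered at the origin. Suppose that for every edge e of P, the orthogonal projection of P onto the line through the origin perpendicular to e is a segment centered at the origin. Then P is centrally symmetric, i.e., P = -P. -/
/-!
Suppose some vertex `a` had `-a ∉ P`. Starting from a direction separating `-a` from `P` and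
turning it, the intermediate value theorem produces the outer normal `η` of an edge `[u, w]`
of `P` with `max_P ⟪η, ·⟫ ≤ ⟪η, -a⟫`. Since the projection onto `η` is centred,
`⟪η, -a⟫ = -⟪η, a⟫ ≤ -min_P ⟪η, ·⟫ = max_P ⟪η, ·⟫`, so `-a` lies on the line through the
edge. That line meets the circle only at `u` and `w`, hence `-a ∈ P` after all. So `P`
contains `-V`, and `P = -P`.
-/

open scoped RealInnerProductSpace

/-- `[u,v]` is an edge of `P`: it is the face of `P` maximizing some nonzero
linear functional. -/
def IsPolygonEdge (P : Set (EuclideanSpace ℝ (Fin 2)))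
    (u v : EuclideanSpace ℝ (Fin 2)) : Prop :=
  u ≠ v ∧ ∃ η : EuclideanSpace ℝ (Fin 2), η ≠ 0 ∧
    {x ∈ P | ∀ y ∈ P, ⟪η, y⟫ ≤ ⟪η, x⟫} = segment ℝ u v

section Convex

variable {E : Type*} [AddCommGroup E] [Module ℝ E]

theorem convexHull_eq_neg_of_forall_neg_mem {s : Set E} (h : ∀ a ∈ s, -a ∈ convexHull ℝ s) :
    convexHull ℝ s = -convexHull ℝ s := by
  have hsub : convexHull ℝ s ⊆ -convexHull ℝ s :=
    convexHull_min (fun a ha => Set.mem_neg.2 (h a ha)) (convex_convexHull ℝ s).neg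
  exact hsub.antisymm (Set.neg_subset.2 hsub)

theorem isGreatest_image_convexHull (ℓ : E →ₗ[ℝ] ℝ) {s : Set E} {u : E} (hu : u ∈ s)
    (hmax : ∀ v ∈ s, ℓ v ≤ ℓ u) : IsGreatest (ℓ '' convexHull ℝ s) (ℓ u) := by
  refine ⟨⟨u, subset_convexHull ℝ s hu, rfl⟩, ?_⟩
  rintro _ ⟨x, hx, rfl⟩
  obtain ⟨v, hv, hxv⟩ :=
    (ℓ.convexOn convex_univ).exists_ge_of_mem_convexHull (Set.subset_univ s) hx
  exact hxv.trans (hmax v hv)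

theorem maximizers_convexHull_eq_convexHull_maximizers (ℓ : E →ₗ[ℝ] ℝ) (s : Finset E) :
    {x ∈ convexHull ℝ (s : Set E) | ∀ y ∈ convexHull ℝ (s : Set E), ℓ y ≤ ℓ x} =
      convexHull ℝ {v ∈ (s : Set E) | ∀ y ∈ (s : Set E), ℓ y ≤ ℓ v} := by
  apply Set.Subset.antisymm
  · rintro x ⟨hx, hxmax⟩
    obtain ⟨w, hw₀, hw₁, rfl⟩ := Finset.mem_convexHull'.1 hx
    set x := ∑ y ∈ s, w y • y
    have hterm : ∀ y ∈ s, w y * (ℓ x - ℓ y) = 0 := by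
      refine (Finset.sum_eq_zero_iff_of_nonneg fun y hy =>
        mul_nonneg (hw₀ y hy) (sub_nonneg.2 (hxmax y (subset_convexHull ℝ _ hy)))).1 ?_
      simp only [mul_sub, Finset.sum_sub_distrib, ← Finset.sum_mul, hw₁, one_mul]
      simp [x, map_sum, map_smul, smul_eq_mul]
    classical
    have hxT : x ∈ convexHull ℝ ((s.filter fun v => ℓ v = ℓ x : Finset E) : Set E) := by
      refine Finset.mem_convexHull'.2 ⟨w, fun y hy => hw₀ y (Finset.mem_filter.1 hy).1, ?_, ?_⟩
      · rw [Finset.sum_filter_of_ne, hw₁]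
        intro y hy hwy
        exact (sub_eq_zero.1 ((mul_eq_zero.1 (hterm y hy)).resolve_left hwy)).symm
      · rw [Finset.sum_filter_of_ne]
        intro y hy hwy
        exact (sub_eq_zero.1
          ((mul_eq_zero.1 (hterm y hy)).resolve_left (left_ne_zero_of_smul hwy))).symm
    refine convexHull_mono ?_ hxT
    intro v hv
    obtain ⟨hvs, hvx⟩ := Finset.mem_filter.1 hv
    exact ⟨hvs, fun y hy => hvx ▸ hxmax y (subset_convexHull ℝ _ hy)⟩
  · intro x hx
    refine ⟨convexHull_mono (fun v hv => hv.1) hx, fun y hy => ?_⟩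
    obtain ⟨v, hv, hyv⟩ :=
      (ℓ.convexOn convex_univ).exists_ge_of_mem_convexHull (Set.subset_univ _) hy
    obtain ⟨t, ht, htx⟩ :=
      (ℓ.concaveOn convex_univ).exists_le_of_mem_convexHull (Set.subset_univ _) hx
    exact hyv.trans ((ht.2 v hv).trans htx)

end Convex

theorem exists_mem_Icc_tie_of_continuousOn {ι : Type*} {s : Finset ι} {G : ι → ℝ → ℝ}
    {a b : ℝ} (hab : a ≤ b) (hG : ∀ k ∈ s, ContinuousOn (G k) (Set.Icc a b)) {i j : ι} (hi : i ∈ s)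
    (hj : j ∈ s) (hji : j ≠ i) (ha : G i a ≤ G j a) (hb : ∀ k ∈ s, G k b ≤ G i b) :
    ∃ θ ∈ Set.Icc a b, ∃ k ∈ s, k ≠ i ∧ G k θ = G i θ ∧ ∀ l ∈ s, G l θ ≤ G i θ := by
  classical
  have hne : (s.erase i).Nonempty := ⟨j, Finset.mem_erase.2 ⟨hji, hj⟩⟩
  set H : ℝ → ℝ := fun θ => (s.erase i).sup' hne fun k => G k θ
  have hH : ContinuousOn H (Set.Icc a b) :=
    ContinuousOn.finset_sup'_apply hne fun k hk => hG k (Finset.mem_of_mem_erase hk)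
  obtain ⟨θ, hθ, hHθ⟩ : ∃ θ ∈ Set.Icc a b, H θ - G i θ = 0 := by
    refine intermediate_value_Icc' hab (hH.sub (hG i hi)) ⟨?_, ?_⟩
    · exact sub_nonpos.2 (Finset.sup'_le _ _ fun k hk => hb k (Finset.mem_of_mem_erase hk))
    · exact sub_nonneg.2
        (ha.trans (Finset.le_sup' (fun k => G k a) (Finset.mem_erase.2 ⟨hji, hj⟩)))
  obtain ⟨k, hk, hHk⟩ := Finset.exists_mem_eq_sup' hne fun k => G k θ
  refine ⟨θ, hθ, k, Finset.mem_of_mem_erase hk, Finset.ne_of_mem_erase hk, ?_, fun l hl => ?_⟩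
  · rw [← hHk]; exact sub_eq_zero.1 hHθ
  · rcases eq_or_ne l i with rfl | hli
    · exact le_rfl
    · exact (Finset.le_sup' (fun k => G k θ) (Finset.mem_erase.2 ⟨hli, hl⟩)).trans
        (sub_eq_zero.1 hHθ).le

section InnerProduct

variable {E : Type*} [NormedAddCommGroup E] [InnerProductSpace ℝ E]

theorem eq_or_eq_of_norm_eq_of_inner_eq [Fact (Module.finrank ℝ E = 2)] {η u v p : E}
    (hη : η ≠ 0) (huv : u ≠ v) (hv : ‖v‖ = ‖u‖) (hp : ‖p‖ = ‖u‖) (hηv : ⟪η, v⟫ = ⟪η, u⟫)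
    (hηp : ⟪η, p⟫ = ⟪η, u⟫) : p = u ∨ p = v := by
  by_contra! h
  obtain ⟨c, hc⟩ := Submodule.mem_span_singleton.1 <|
    Submodule.mem_span_singleton_of_inner_eq_zero_of_inner_eq_zero (𝕜 := ℝ) (u := p - u) hη
      (sub_ne_zero.2 huv.symm) (by rw [inner_sub_right, hηp, sub_self])
      (by rw [inner_sub_right, hηv, sub_self])
  have hcol : Collinear ℝ ({p, u, v} : Set E) := by
    refine collinear_insert_of_mem_affineSpan_pair ?_
    convert AffineMap.lineMap_mem_affineSpan_pair c u v using 1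
    rw [AffineMap.lineMap_apply, vsub_eq_sub, vadd_eq_add, hc, sub_add_cancel]
  have hcos : EuclideanGeometry.Cospherical ({p, u, v} : Set E) :=
    ⟨0, ‖u‖, by simp [or_imp, forall_and, hv, hp]⟩
  exact affineIndependent_iff_not_collinear_set.1 (hcos.affineIndependent_of_ne h.1 h.2 huv) hcol

theorem exists_two_maximizers_le_of_linearIndependent {V : Finset E} {z η₀ ζ : E}
    (hind : LinearIndependent ℝ ![η₀, ζ]) (hsep : ∀ v ∈ V, ⟪η₀, v⟫ < ⟪η₀, z⟫)
    (hV : 1 < V.card) :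
    ∃ η ≠ 0, ∃ u ∈ V, ∃ w ∈ V, w ≠ u ∧ ⟪η, w⟫ = ⟪η, u⟫ ∧ (∀ v ∈ V, ⟪η, v⟫ ≤ ⟪η, u⟫) ∧
      ⟪η, u⟫ ≤ ⟪η, z⟫ := by
  classical
  -- `σ v` is the slope of `z - v` in the frame `(η₀, ζ)`. The direction `ηt` is maximised on
  -- `V` at the vertex `v₁` of least slope, `ηs` on `V.erase v₁` at the vertex `v₂` of greatest
  -- slope, and `z` lies on both supporting lines; along the segment from `ηs` to `ηt` the
  -- intermediate value theorem finds a direction where `v₁` ties with another maximiser.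
  set σ : E → ℝ := fun v => ⟪ζ, z - v⟫ / ⟪η₀, z - v⟫
  have hα : ∀ v ∈ V, 0 < ⟪η₀, z - v⟫ := fun v hv => by
    rw [inner_sub_right]; linarith [hsep v hv]
  obtain ⟨v₁, hv₁, hmin⟩ := V.exists_min_image σ (Finset.card_pos.1 (by omega))
  obtain ⟨v₂, hv₂', hmax⟩ := (V.erase v₁).exists_max_image σ
    (Finset.card_pos.1 (by rw [Finset.card_erase_of_mem hv₁]; omega))
  obtain ⟨hv₂₁, hv₂⟩ := Finset.mem_erase.1 hv₂'
  set ηt := ζ - σ v₁ • η₀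
  set ηs := σ v₂ • η₀ - ζ
  have hβ : ∀ v ∈ V, ⟪ζ, z - v⟫ = σ v * ⟪η₀, z - v⟫ := fun v hv =>
    (div_mul_cancel₀ _ (hα v hv).ne').symm
  have hηt : ∀ v ∈ V, ⟪ηt, z⟫ - ⟪ηt, v⟫ = (σ v - σ v₁) * ⟪η₀, z - v⟫ := fun v hv => by
    rw [← inner_sub_right, inner_sub_left, real_inner_smul_left, hβ v hv]; ring
  have hηs : ∀ v ∈ V, ⟪ηs, z⟫ - ⟪ηs, v⟫ = (σ v₂ - σ v) * ⟪η₀, z - v⟫ := fun v hv => by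
    rw [← inner_sub_right, inner_sub_left, real_inner_smul_left, hβ v hv]; ring
  have ht_z : ⟪ηt, v₁⟫ = ⟪ηt, z⟫ := by
    have := hηt v₁ hv₁
    rw [sub_self, zero_mul] at this
    linarith
  have ht_max : ∀ v ∈ V, ⟪ηt, v⟫ ≤ ⟪ηt, v₁⟫ := fun v hv => by
    linarith [hηt v hv, mul_nonneg (sub_nonneg.2 (hmin v hv)) (hα v hv).le]
  have hs_z : ⟪ηs, v₁⟫ ≤ ⟪ηs, z⟫ := by
    linarith [hηs v₁ hv₁, mul_nonneg (sub_nonneg.2 (hmin v₂ hv₂)) (hα v₁ hv₁).le]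
  have hs₂ : ⟪ηs, v₂⟫ = ⟪ηs, z⟫ := by
    have := hηs v₂ hv₂
    rw [sub_self, zero_mul] at this
    linarith
  have hcomb : ∀ a b : ℝ, a • η₀ + b • ζ = 0 → a = 0 ∧ b = 0 :=
    LinearIndependent.pair_iff.1 hind
  -- If the slopes agree, `ηs = -ηt` and the segment passes through `0`; but then `ηt` works.
  by_cases hσ : σ v₂ = σ v₁
  · refine ⟨ηt, fun h => ?_, v₁, hv₁, v₂, hv₂, hv₂₁, ?_, ht_max, ht_z.le⟩
    · exact one_ne_zero (hcomb (-σ v₁) 1 (by rw [← h]; simp only [ηt]; module)).2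
    · have := hηt v₂ hv₂
      rw [hσ, sub_self, zero_mul] at this
      linarith
  set η : ℝ → E := fun t => (1 - t) • ηs + t • ηt
  have hη : ∀ t x, ⟪η t, x⟫ = (1 - t) * ⟪ηs, x⟫ + t * ⟪ηt, x⟫ := fun t x => by
    simp only [η, inner_add_left, real_inner_smul_left]
  obtain ⟨t, ht, w, hw, hwv₁, hweq, hmaxt⟩ :=
    exists_mem_Icc_tie_of_continuousOn (G := fun v t => ⟪η t, v⟫) zero_le_one
      (fun v _ => by simp only [hη]; fun_prop) hv₁ hv₂ hv₂₁
      (by simp only [hη]; linarith) (fun v hv => by simp only [hη]; linarith [ht_max v hv])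
  refine ⟨η t, fun h => hσ ?_, v₁, hv₁, w, hw, hwv₁, hweq, hmaxt, ?_⟩
  · obtain ⟨h₁, h₂⟩ := hcomb ((1 - t) * σ v₂ - t * σ v₁) (2 * t - 1)
      (by rw [← h]; simp only [η, ηs, ηt]; module)
    have : t = 1 / 2 := by linarith
    subst this
    linarith
  · rw [hη, hη, ht_z]
    linarith [mul_le_mul_of_nonneg_left hs_z (sub_nonneg.2 ht.2)]

theorem exists_two_maximizers_le_of_notMem_convexHull (hE : 1 < Module.finrank ℝ E)
    {V : Finset E} {z : E} (hV : 1 < V.card) (hz : z ∉ convexHull ℝ (V : Set E)) :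
    ∃ η ≠ 0, ∃ u ∈ V, ∃ w ∈ V, w ≠ u ∧ ⟪η, w⟫ = ⟪η, u⟫ ∧ (∀ v ∈ V, ⟪η, v⟫ ≤ ⟪η, u⟫) ∧
      ⟪η, u⟫ ≤ ⟪η, z⟫ := by
  have : FiniteDimensional ℝ E := Module.finite_of_finrank_pos (by omega)
  have : CompleteSpace E := FiniteDimensional.complete ℝ E
  obtain ⟨f, c, hf, hc⟩ := geometric_hahn_banach_closed_point (convex_convexHull ℝ _)
    (V.finite_toSet.isCompact_convexHull ℝ).isClosed hz
  set η₀ := (InnerProductSpace.toDual ℝ E).symm f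
  have hsep : ∀ v ∈ V, ⟪η₀, v⟫ < ⟪η₀, z⟫ := fun v hv => by
    simp only [η₀, InnerProductSpace.toDual_symm_apply]
    exact (hf v (subset_convexHull ℝ _ hv)).trans hc
  have hη₀ : η₀ ≠ 0 := fun h => by
    obtain ⟨v, hv⟩ := Finset.card_pos.1 (by omega : 0 < V.card)
    simpa [h] using hsep v hv
  obtain ⟨ζ, hζ⟩ := exists_linearIndependent_pair_of_one_lt_finrank hE hη₀
  exact exists_two_maximizers_le_of_linearIndependent hζ hsep hV

end InnerProduct

theorem stmt_8_general (P : Set (EuclideanSpace ℝ (Fin 2)))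
    (V : Finset (EuclideanSpace ℝ (Fin 2)))
    (hP : P = convexHull ℝ (V : Set (EuclideanSpace ℝ (Fin 2))))
    (hcard : 3 ≤ V.card) (r : ℝ)
    (hV : ∀ v ∈ V, ‖v‖ = r)
    (hproj : ∀ u v, IsPolygonEdge P u v →
      ∀ w : EuclideanSpace ℝ (Fin 2), ⟪w, u - v⟫ = 0 →
        sSup ((fun x => ⟪w, x⟫) '' P) = - sInf ((fun x => ⟪w, x⟫) '' P)) :
    P = -P := by
  subst hP
  have : Fact (Module.finrank ℝ (EuclideanSpace ℝ (Fin 2)) = 2) := ⟨finrank_euclideanSpace_fin⟩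
  refine convexHull_eq_neg_of_forall_neg_mem fun a ha => by_contra fun hz => ?_
  obtain ⟨η, hη, u, hu, w, hw, hwu, hwη, hmax, hzη⟩ :=
    exists_two_maximizers_le_of_notMem_convexHull (by simp) (by omega) hz
  have hline : ∀ p, ‖p‖ = r → ⟪η, p⟫ = ⟪η, u⟫ → p = u ∨ p = w := fun p hp hpη =>
    eq_or_eq_of_norm_eq_of_inner_eq hη hwu.symm (by rw [hV w hw, hV u hu])
      (by rw [hp, hV u hu]) hwη hpη
  have hface : {v ∈ (V : Set _) | ∀ y ∈ (V : Set _), ⟪η, y⟫ ≤ ⟪η, v⟫} = {u, w} := by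
    ext v
    constructor
    · rintro ⟨hv, hvmax⟩
      exact hline v (hV v hv) (le_antisymm (hmax v hv) (hvmax u hu))
    · rintro (rfl | rfl)
      · exact ⟨hu, hmax⟩
      · exact ⟨hw, fun y hy => hwη ▸ hmax y hy⟩
  have hedge : IsPolygonEdge (convexHull ℝ V) u w :=
    ⟨hwu.symm, η, hη, by
      rw [← convexHull_pair, ← hface]
      exact maximizers_convexHull_eq_convexHull_maximizers (innerₛₗ ℝ η) V⟩
  have hsup : sSup ((fun x => ⟪η, x⟫) '' convexHull ℝ V) = ⟪η, u⟫ :=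
    (isGreatest_image_convexHull (innerₛₗ ℝ η) hu hmax).csSup_eq
  have hinf := hproj u w hedge η (by rw [inner_sub_right, hwη, sub_self])
  have ha_ge : -⟪η, u⟫ ≤ ⟪η, a⟫ := by
    rw [← hsup, hinf, neg_neg]
    exact csInf_le ((V.finite_toSet.isCompact_convexHull ℝ).image (by fun_prop)).bddBelow
      ⟨a, subset_convexHull ℝ _ ha, rfl⟩
  have hzη' : ⟪η, -a⟫ = ⟪η, u⟫ := by rw [inner_neg_right] at hzη ⊢; linarith
  rcases hline (-a) (by rw [norm_neg, hV a ha]) hzη' with h | h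
  · exact hz (h ▸ subset_convexHull ℝ _ hu)
  · exact hz (h ▸ subset_convexHull ℝ _ hw)

theorem stmt_8 (P : Set (EuclideanSpace ℝ (Fin 2)))
    (V : Finset (EuclideanSpace ℝ (Fin 2)))
    (hP : P = convexHull ℝ (V : Set (EuclideanSpace ℝ (Fin 2))))
    (hcard : 3 ≤ V.card) (r : ℝ) (hr : 0 < r)
    (hV : ∀ v ∈ V, ‖v‖ = r)
    (hproj : ∀ u v, IsPolygonEdge P u v →
      ∀ w : EuclideanSpace ℝ (Fin 2), ⟪w, u - v⟫ = 0 →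
        sSup ((fun x => ⟪w, x⟫) '' P) = - sInf ((fun x => ⟪w, x⟫) '' P)) :
    P = -P :=
  stmt_8_general P V hP hcard r hV hproj
end

section
/- Let n ≥ 4 and let Q be a symmetric n×n real matrix such that (e_i + σ e_j)^T Q (e_k + τ e_l) = 0 for all σ, τ ∈ {−1, +1} and all pairwise distinct indices i < j, k < l with {i,j} ∩ {k,l} = ∅, and (e_i − e_j)^T Q (e_i + e_j) = 0 for all i < j. Then Q = a·I for some a ∈ R. -/
open Matrix

theorem stmt_15 (n : ℕ) (hn : 4 ≤ n) (Q : Matrix (Fin n) (Fin n) ℝ)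
    (hQ : Q.IsSymm)
    (h1 : ∀ i j k l : Fin n, i < j → k < l →
      i ≠ k → i ≠ l → j ≠ k → j ≠ l →
      ∀ σ τ : ℝ, (σ = 1 ∨ σ = -1) → (τ = 1 ∨ τ = -1) →
        dotProduct ((Pi.single i 1 : Fin n → ℝ) + σ • (Pi.single j 1 : Fin n → ℝ))
          (Q.mulVec ((Pi.single k 1 : Fin n → ℝ) + τ • (Pi.single l 1 : Fin n → ℝ))) = 0)
    (h2 : ∀ i j : Fin n, i < j →
      dotProduct ((Pi.single i 1 : Fin n → ℝ) - (Pi.single j 1 : Fin n → ℝ))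
        (Q.mulVec ((Pi.single i 1 : Fin n → ℝ) + (Pi.single j 1 : Fin n → ℝ))) = 0) :
    ∃ a : ℝ, Q = a • (1 : Matrix (Fin n) (Fin n) ℝ) := by
  have base : ∀ i k : Fin n,
      dotProduct (Pi.single i 1 : Fin n → ℝ) (Q.mulVec (Pi.single k 1)) = Q i k := by
    intro i k
    simp [mulVec_single, dotProduct, Pi.single_apply]
  -- for four distinct indices with a<b, c<d, all cross entries vanish
  have key : ∀ a b c d : Fin n, a < b → c < d → a ≠ c → a ≠ d → b ≠ c → b ≠ d →
      Q a c = 0 ∧ Q a d = 0 ∧ Q b c = 0 ∧ Q b d = 0 := by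
    intro a b c d hab hcd h1' h2' h3' h4'
    have E1 := h1 a b c d hab hcd h1' h2' h3' h4' 1 1 (Or.inl rfl) (Or.inl rfl)
    have E2 := h1 a b c d hab hcd h1' h2' h3' h4' 1 (-1) (Or.inl rfl) (Or.inr rfl)
    have E3 := h1 a b c d hab hcd h1' h2' h3' h4' (-1) 1 (Or.inr rfl) (Or.inl rfl)
    have E4 := h1 a b c d hab hcd h1' h2' h3' h4' (-1) (-1) (Or.inr rfl) (Or.inr rfl)
    simp only [dotProduct_add, add_dotProduct, mulVec_add, mulVec_smul, dotProduct_smul,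
      smul_dotProduct, smul_eq_mul, base, one_mul, neg_mul, neg_one_mul, mul_neg,
      neg_neg] at E1 E2 E3 E4
    refine ⟨by linarith, by linarith, by linarith, by linarith⟩
  -- off-diagonal entries vanish
  have offdiag : ∀ i k : Fin n, i ≠ k → Q i k = 0 := by
    intro i k hik
    have hj : ∃ j, j ∉ ({i, k} : Finset (Fin n)) := by
      by_contra h
      push_neg at h
      have hc : (Finset.univ : Finset (Fin n)).card ≤ ({i, k} : Finset (Fin n)).card :=
        Finset.card_le_card (fun x _ => h x)
      have h2' : ({i, k} : Finset (Fin n)).card ≤ 2 :=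
        (Finset.card_insert_le _ _).trans (by simp)
      simp [Finset.card_univ] at hc
      omega
    obtain ⟨j, hj⟩ := hj
    simp only [Finset.mem_insert, Finset.mem_singleton, not_or] at hj
    obtain ⟨hji, hjk⟩ := hj
    have hl : ∃ l, l ∉ ({i, k, j} : Finset (Fin n)) := by
      by_contra h
      push_neg at h
      have hc : (Finset.univ : Finset (Fin n)).card ≤ ({i, k, j} : Finset (Fin n)).card :=
        Finset.card_le_card (fun x _ => h x)
      have h2' : ({i, k, j} : Finset (Fin n)).card ≤ 3 :=
        (Finset.card_insert_le _ _).trans (by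
          have := Finset.card_insert_le k ({j} : Finset (Fin n))
          simp at this ⊢
          omega)
      simp [Finset.card_univ] at hc
      omega
    obtain ⟨l, hl⟩ := hl
    simp only [Finset.mem_insert, Finset.mem_singleton, not_or] at hl
    obtain ⟨hli, hlk, hlj⟩ := hl
    rcases lt_or_gt_of_ne (Ne.symm hji) with hij | hij <;>
      rcases lt_or_gt_of_ne (Ne.symm hlk) with hkl | hkl
    · exact (key i j k l hij hkl hik (Ne.symm hli) hjk (Ne.symm hlj)).1
    · exact (key i j l k hij hkl (Ne.symm hli) hik (Ne.symm hlj) hjk).2.1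
    · exact (key j i k l hij hkl hjk (Ne.symm hlj) hik (Ne.symm hli)).2.2.1
    · exact (key j i l k hij hkl (Ne.symm hlj) hjk (Ne.symm hli) hik).2.2.2
  -- diagonal entries are all equal
  have hpos : 0 < n := by omega
  have diag : ∀ i : Fin n, Q i i = Q ⟨0, hpos⟩ ⟨0, hpos⟩ := by
    have gen : ∀ i j : Fin n, i < j → Q i i = Q j j := by
      intro i j hij
      have := h2 i j hij
      simp only [dotProduct_add, add_dotProduct, sub_dotProduct, mulVec_add, base] at this
      have hsymm : Q j i = Q i j := hQ.apply i j
      linarith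
    intro i
    rcases eq_or_ne i ⟨0, hpos⟩ with h | h
    · rw [h]
    · have : (⟨0, hpos⟩ : Fin n) < i := by
        rcases lt_or_gt_of_ne h with h' | h'
        · exact absurd h' (by simp [Fin.lt_def])
        · exact h'
      exact (gen _ _ this).symm
  refine ⟨Q ⟨0, hpos⟩ ⟨0, hpos⟩, ?_⟩
  ext i j
  rcases eq_or_ne i j with h | h
  · subst h
    simp [Matrix.one_apply, diag i]
  · simp [Matrix.one_apply, h, offdiag i j h]
end
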